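/- For every x ∈ ℚ, every c ∈ ℚ, and every integer d ≥ 1, one has |h(x^d + c) − d·h(x)| ≤ h(c) + log 2. -/
import Mathlib


/-- Multiplicative Weil height of a rational number: `H(p/q) = max(|p|, q)`. -/
noncomputable def ratH (x : ℚ) : ℝ := max |(x.num : ℝ)| (x.den : ℝ)

/-- Logarithmic Weil height of a rational number. -/
noncomputable def rath (x : ℚ) : ℝ := Real.log (ratH x)

lemma one_le_ratH (x : ℚ) : 1 ≤ ratH x :=
  le_max_of_le_right (by exact_mod_cast x.pos)

lemma ratH_pos (x : ℚ) : 0 < ratH x := lt_of_lt_of_le one_pos (one_le_ratH x)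

lemma abs_num_le_ratH (x : ℚ) : |(x.num : ℝ)| ≤ ratH x := le_max_left _ _

lemma den_le_ratH (x : ℚ) : (x.den : ℝ) ≤ ratH x := le_max_right _ _

lemma ratH_add_le (a b : ℚ) : ratH (a + b) ≤ 2 * ratH a * ratH b := by
  have hprod : (1 : ℝ) ≤ ratH a * ratH b :=
    one_le_mul_of_one_le_of_one_le (one_le_ratH a) (one_le_ratH b)
  have hN : (|((a.num * b.den + a.den * b.num : ℤ) : ℝ)|) ≤ 2 * ratH a * ratH b := by
    push_cast
    calc |(a.num : ℝ) * b.den + a.den * b.num|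
        ≤ |(a.num : ℝ) * b.den| + |(a.den : ℝ) * b.num| := abs_add_le _ _
      _ = |(a.num : ℝ)| * b.den + (a.den : ℝ) * |(b.num : ℝ)| := by
          rw [abs_mul, abs_mul, abs_of_nonneg (by positivity : (0:ℝ) ≤ (b.den : ℝ)),
            abs_of_nonneg (by positivity : (0:ℝ) ≤ (a.den : ℝ))]
      _ ≤ ratH a * ratH b + ratH a * ratH b :=
          add_le_add
            (mul_le_mul (abs_num_le_ratH a) (den_le_ratH b) (by positivity)
              (le_of_lt (ratH_pos a)))
            (mul_le_mul (den_le_ratH a) (abs_num_le_ratH b) (abs_nonneg _)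
              (le_of_lt (ratH_pos a)))
      _ = 2 * ratH a * ratH b := by ring
  have hDden : (a + b).den ∣ a.den * b.den := Rat.add_den_dvd a b
  have hden : ((a + b).den : ℝ) ≤ 2 * ratH a * ratH b := by
    have h1 : ((a + b).den : ℝ) ≤ (a.den : ℝ) * b.den := by
      have := Nat.le_of_dvd (by positivity) hDden
      exact_mod_cast this
    calc ((a + b).den : ℝ) ≤ (a.den : ℝ) * b.den := h1
      _ ≤ ratH a * ratH b := mul_le_mul (den_le_ratH a) (den_le_ratH b)
            (by positivity) (le_of_lt (ratH_pos a))
      _ ≤ 2 * ratH a * ratH b := by nlinarith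
  have hnumle : |((a + b).num : ℝ)| ≤ 2 * ratH a * ratH b := by
    set N : ℤ := a.num * b.den + a.den * b.num with hNdef
    have hadd : a + b = Rat.divInt N ((a.den : ℤ) * b.den) := Rat.add_num_den a b
    by_cases h0 : N = 0
    · have : a + b = 0 := by rw [hadd, h0]; simp
      rw [this]
      simpa using le_trans (by norm_num : (0:ℝ) ≤ 1) (by nlinarith : (1:ℝ) ≤ 2 * ratH a * ratH b)
    · have hdvd : (a + b).num ∣ N := by
        rw [hadd]
        exact Rat.num_dvd _ (by positivity)
      have habs : |(a + b).num| ≤ |N| :=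
        Int.le_of_dvd (abs_pos.2 h0) ((abs_dvd _ _).2 ((dvd_abs _ _).2 hdvd))
      calc |((a + b).num : ℝ)| = ((|(a+b).num| : ℤ) : ℝ) := by push_cast; ring
        _ ≤ ((|N| : ℤ) : ℝ) := by exact_mod_cast habs
        _ ≤ 2 * ratH a * ratH b := by
            rw [show ((|N| : ℤ) : ℝ) = |(N : ℝ)| by push_cast; ring]
            exact hN
  exact max_le hnumle hden

lemma rath_nonneg (x : ℚ) : 0 ≤ rath x := Real.log_nonneg (one_le_ratH x)

lemma rath_add_le (a b : ℚ) : rath (a + b) ≤ rath a + rath b + Real.log 2 := by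
  have h := ratH_add_le a b
  have := Real.log_le_log (ratH_pos (a + b)) h
  rw [Real.log_mul (mul_pos two_pos (ratH_pos a)).ne' (ratH_pos b).ne',
    Real.log_mul (by norm_num) (ratH_pos a).ne'] at this
  unfold rath
  linarith

lemma rath_neg (c : ℚ) : rath (-c) = rath c := by
  unfold rath ratH
  rw [Rat.num_neg_eq_neg_num, Rat.den_neg_eq_den]
  push_cast
  rw [abs_neg]

lemma rath_pow (x : ℚ) (d : ℕ) : rath (x ^ d) = d * rath x := by
  unfold rath ratH
  rw [Rat.num_pow, Rat.den_pow]
  push_cast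
  rw [abs_pow]
  have hmax : max (|(x.num : ℝ)| ^ d) ((x.den : ℝ) ^ d)
      = (max |(x.num : ℝ)| (x.den : ℝ)) ^ d := by
    rcases le_total |(x.num : ℝ)| (x.den : ℝ) with h | h
    · rw [max_eq_right h, max_eq_right (pow_le_pow_left₀ (abs_nonneg _) h d)]
    · rw [max_eq_left h, max_eq_left (pow_le_pow_left₀ (by positivity) h d)]
  rw [hmax, Real.log_pow]

theorem stmt17 (x c : ℚ) (d : ℕ) (hd : 1 ≤ d) :
    |rath (x ^ d + c) - (d : ℝ) * rath x| ≤ rath c + Real.log 2 := by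
  set y := x ^ d with hy
  have hyp : rath y = (d : ℝ) * rath x := rath_pow x d
  rw [← hyp]
  rw [abs_le]
  constructor
  · have h1 : rath y ≤ rath (y + c) + rath c + Real.log 2 := by
      have : rath ((y + c) + (-c)) ≤ rath (y + c) + rath (-c) + Real.log 2 :=
        rath_add_le _ _
      rw [rath_neg] at this
      simpa using this
    linarith
  · have h2 : rath (y + c) ≤ rath y + rath c + Real.log 2 := rath_add_le y c
    linarith
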